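/- arXiv:2009.02183 — 2 statements merged into one kernel-verified Lean document; each statement's English description precedes it below -/
import Mathlib

section
/- Let n = n_r + n_d + m̂ where m̂ = m_1 + … + m_{n_c} and n_c ≥ 1, with categorical blocks B_h ⊆ {1,…,n}, B_h = {n_r + n_d + m̂_{h−1} + 1, …, n_r + n_d + m̂_h}, and let j_h = n_r + n_d + m̂_h denote the last index of block B_h. Let x^1,…,x^k ∈ ℝ^n be points each satisfying the unary-encoding constraints: for every i and every h, x^i_j ∈ {0,1} for all j ∈ B_h and Σ_{j ∈ B_h} x^i_j = 1. Let Φ be the k×k matrix with Φ_{il} = φ(‖x^i − x^l‖) for a function φ : ℝ → ℝ, let P be the k×(n+1) matrix whose i-th row is ((x^i)^⊤, 1), and let P̂ be obtained from P by deleting the columns with indices j_1,…,j_{n_c}. Let F ∈ ℝ^k. If the full system [[Φ, P],[P^⊤, 0]] (λ; α) = (F; 0) has a solution (λ, α) ∈ ℝ^k × ℝ^{n+1}, then the reduced system [[Φ, P̂],[P̂^⊤, 0]] (λ; α') = (F; 0) has a solution (λ, α') ∈ ℝ^k × ℝ^{n+1−n_c}. -/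
/-!
Deleting columns of `P` that lie in the span of the remaining ones changes neither the column
space of `P`, so `P α = P̂ α'` for some `α'`, nor the side condition, since `P̂ᵀ λ = 0` is a
subset of the equations `Pᵀ λ = 0`. In unary encoding the columns of a categorical block sum to
the constant column, so the last column of a block is the constant column minus the other
columns of the block, none of which is deleted.
-/

open Matrix Finset Submodule

theorem Matrix.exists_submatrix_mulVec_eq_mulVec {R m n ι : Type*} [CommSemiring R]
    [Fintype n] [Fintype ι] (A : Matrix m n R) (f : ι → n)
    (hA : ∀ j, A.col j ∈ span R (Set.range fun l => A.col (f l))) (v : n → R) :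
    ∃ w, A.submatrix id f *ᵥ w = A *ᵥ v := by
  have hv : A *ᵥ v ∈ span R (Set.range A.col) :=
    A.range_mulVecLin ▸ LinearMap.mem_range_self A.mulVecLin v
  have hsub : A *ᵥ v ∈ span R (Set.range (A.submatrix id f).col) :=
    span_le.2 (Set.range_subset_iff.2 hA) hv
  rw [← range_mulVecLin] at hsub
  exact hsub

theorem Matrix.fromBlocks_submatrix_mulVec_eq_of_mulVec_eq {R m n ι : Type*}
    [NonUnitalNonAssocSemiring R] [Fintype m] [Fintype n] [Fintype ι]
    {Φ : Matrix m m R} {P : Matrix m n R} (f : ι → n) {lam F : m → R} {α : n → R} {α' : ι → R}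
    (hsol : fromBlocks Φ P Pᵀ 0 *ᵥ Sum.elim lam α = Sum.elim F 0)
    (hα : P.submatrix id f *ᵥ α' = P *ᵥ α) :
    fromBlocks Φ (P.submatrix id f) (P.submatrix id f)ᵀ 0 *ᵥ Sum.elim lam α' = Sum.elim F 0 := by
  simp only [fromBlocks_mulVec, Sum.elim_comp_inl, Sum.elim_comp_inr, zero_mulVec, add_zero,
    Sum.elim_eq_iff] at hsol ⊢
  refine ⟨hα ▸ hsol.1, ?_⟩
  rw [transpose_submatrix]
  ext l
  simpa [mulVec, dotProduct] using congrFun hsol.2 (f l)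

theorem Submodule.mem_of_sum_mem_of_mem_erase {R M ι : Type*} [Ring R] [AddCommGroup M]
    [Module R M] [DecidableEq ι] {p : Submodule R M} {v : ι → M} {B : Finset ι} {d : ι}
    (hd : d ∈ B) (hB : ∑ j ∈ B, v j ∈ p) (herase : ∀ j ∈ B.erase d, v j ∈ p) : v d ∈ p := by
  rw [← add_sum_erase B v hd] at hB
  exact (p.add_mem_iff_left (sum_mem herase)).1 hB

def categoricalBlock (s : ℕ → ℕ) (n h : ℕ) : Finset (Fin n) :=
  univ.filter fun j : Fin n => s h ≤ j ∧ (j : ℕ) < s (h + 1)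

theorem mem_span_compl_of_categoricalBlock_sum {R M : Type*} [Ring R] [AddCommGroup M]
    [Module R M] {n nc : ℕ} {s : ℕ → ℕ} (hs : Monotone s) (hsn : s nc ≤ n)
    (hne : ∀ h < nc, s h < s (h + 1)) {c : Fin (n + 1) → M}
    (hblock : ∀ h < nc, ∑ j ∈ categoricalBlock s n h, c j.castSucc = c (Fin.last n))
    {D : Finset (Fin (n + 1))} (hD : ∀ l : Fin (n + 1), l ∈ D ↔ ∃ h < nc, (l : ℕ) + 1 = s (h + 1))
    (l : Fin (n + 1)) : c l ∈ span R (Set.range fun l : {l // l ∉ D} => c l) := by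
  have hkept : ∀ l ∉ D, c l ∈ span R (Set.range fun l : {l // l ∉ D} => c l) :=
    fun l hl => subset_span ⟨⟨l, hl⟩, rfl⟩
  by_cases hl : l ∈ D
  swap
  · exact hkept l hl
  obtain ⟨h, hh, hlh⟩ := (hD l).1 hl
  have hsh : s (h + 1) ≤ n := (hs hh).trans hsn
  obtain ⟨j, rfl⟩ : ∃ j : Fin n, j.castSucc = l := ⟨⟨l, by omega⟩, rfl⟩
  have hlast : Fin.last n ∉ D := by
    rw [hD]
    rintro ⟨h', hh', heq⟩
    have := (hs (show h' + 1 ≤ nc from hh')).trans hsn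
    simp only [Fin.val_last] at heq
    omega
  have hj : j ∈ categoricalBlock s n h := by
    simp only [categoricalBlock, mem_filter, mem_univ, true_and, Fin.val_castSucc] at hlh ⊢
    have := hne h hh
    omega
  refine mem_of_sum_mem_of_mem_erase (v := fun j => c j.castSucc) hj
    ((hblock h hh).symm ▸ hkept _ hlast) fun j' hj' => hkept _ ?_
  simp only [categoricalBlock, mem_erase, mem_filter, mem_univ, true_and, ne_eq,
    Fin.ext_iff] at hj'
  rw [hD]
  rintro ⟨h', -, heq⟩
  simp only [Fin.val_castSucc] at hlh heq
  exact hs.ne_of_lt_of_lt_nat h (by omega) (by omega) (h' + 1) heq.symm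

theorem rbf_reduced_linear_system_general
    (nr nd nc k : ℕ) (m : ℕ → ℕ)
    (n : ℕ) (hn : n = nr + nd + ∑ i ∈ Finset.range nc, m i)
    (X : Fin k → EuclideanSpace ℝ (Fin n))
    (hsum : ∀ i : Fin k, ∀ h : ℕ, h < nc →
      ∑ j ∈ Finset.univ.filter (fun j : Fin n =>
        nr + nd + ∑ i' ∈ Finset.range h, m i' ≤ (j : ℕ) ∧
        (j : ℕ) < nr + nd + ∑ i' ∈ Finset.range (h + 1), m i'), X i j = 1)
    (Φ : Matrix (Fin k) (Fin k) ℝ)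
    (P : Matrix (Fin k) (Fin (n + 1)) ℝ)
    (hP : ∀ (i : Fin k) (l : Fin (n + 1)),
      P i l = if hl : (l : ℕ) < n then X i ⟨(l : ℕ), hl⟩ else 1)
    (D : Finset (Fin (n + 1)))
    (hD : ∀ l : Fin (n + 1), l ∈ D ↔
      ∃ h < nc, (l : ℕ) + 1 = nr + nd + ∑ i' ∈ Finset.range (h + 1), m i')
    (F : Fin k → ℝ)
    (lam : Fin k → ℝ) (α : Fin (n + 1) → ℝ)
    (hsol : (Matrix.fromBlocks Φ P Pᵀ 0).mulVec (Sum.elim lam α) = Sum.elim F 0) :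
    ∃ α' : {l : Fin (n + 1) // l ∉ D} → ℝ,
      (Matrix.fromBlocks Φ
        (Matrix.of fun (i : Fin k) (l : {l : Fin (n + 1) // l ∉ D}) => P i l.val)
        (Matrix.of fun (i : Fin k) (l : {l : Fin (n + 1) // l ∉ D}) => P i l.val)ᵀ
        0).mulVec (Sum.elim lam α') = Sum.elim F 0 := by
  have hs : Monotone fun h => nr + nd + ∑ i ∈ range h, m i := fun a b hab =>
    Nat.add_le_add_left (sum_le_sum_of_subset (range_subset_range.2 hab)) _
  have hcol : ∀ l, P.col l ∈ span ℝ (Set.range fun l : {l // l ∉ D} => P.col l) := by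
    rcases isEmpty_or_nonempty (Fin k) with hk | ⟨⟨i⟩⟩
    · intro l
      rw [Subsingleton.elim (P.col l) 0]
      exact zero_mem _
    refine mem_span_compl_of_categoricalBlock_sum hs hn.ge (fun h hh => ?_) (fun h hh => ?_) hD
    · obtain ⟨j, hj⟩ := nonempty_of_sum_ne_zero ((hsum i h hh).symm ▸ one_ne_zero)
      exact ((mem_filter.1 hj).2.1).trans_lt (mem_filter.1 hj).2.2
    · funext i
      simpa [Finset.sum_apply, hP, categoricalBlock] using hsum i h hh
  obtain ⟨α', hα'⟩ := P.exists_submatrix_mulVec_eq_mulVec Subtype.val hcol α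
  exact ⟨α', fromBlocks_submatrix_mulVec_eq_of_mulVec_eq _ hsol hα'⟩

/-- Proposition "Reduced linear system": if the full RBF interpolation system
has a solution, then so does the reduced system obtained by deleting the last
column of each categorical block from `P`. -/
theorem rbf_reduced_linear_system
    (nr nd nc k : ℕ) (hnc : 1 ≤ nc) (m : ℕ → ℕ)
    (n : ℕ) (hn : n = nr + nd + ∑ i ∈ Finset.range nc, m i)
    (X : Fin k → EuclideanSpace ℝ (Fin n))
    (hbin : ∀ i : Fin k, ∀ h : ℕ, h < nc → ∀ j : Fin n,
      (nr + nd + ∑ i' ∈ Finset.range h, m i' ≤ (j : ℕ) ∧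
        (j : ℕ) < nr + nd + ∑ i' ∈ Finset.range (h + 1), m i') →
      (X i j = 0 ∨ X i j = 1))
    (hsum : ∀ i : Fin k, ∀ h : ℕ, h < nc →
      ∑ j ∈ Finset.univ.filter (fun j : Fin n =>
        nr + nd + ∑ i' ∈ Finset.range h, m i' ≤ (j : ℕ) ∧
        (j : ℕ) < nr + nd + ∑ i' ∈ Finset.range (h + 1), m i'), X i j = 1)
    (φ : ℝ → ℝ)
    (Φ : Matrix (Fin k) (Fin k) ℝ) (hΦ : ∀ i l, Φ i l = φ ‖X i - X l‖)
    (P : Matrix (Fin k) (Fin (n + 1)) ℝ)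
    (hP : ∀ (i : Fin k) (l : Fin (n + 1)),
      P i l = if hl : (l : ℕ) < n then X i ⟨(l : ℕ), hl⟩ else 1)
    (D : Finset (Fin (n + 1)))
    (hD : ∀ l : Fin (n + 1), l ∈ D ↔
      ∃ h < nc, (l : ℕ) + 1 = nr + nd + ∑ i' ∈ Finset.range (h + 1), m i')
    (F : Fin k → ℝ)
    (lam : Fin k → ℝ) (α : Fin (n + 1) → ℝ)
    (hsol : (Matrix.fromBlocks Φ P Pᵀ 0).mulVec (Sum.elim lam α) = Sum.elim F 0) :
    ∃ α' : {l : Fin (n + 1) // l ∉ D} → ℝ,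
      (Matrix.fromBlocks Φ
        (Matrix.of fun (i : Fin k) (l : {l : Fin (n + 1) // l ∉ D}) => P i l.val)
        (Matrix.of fun (i : Fin k) (l : {l : Fin (n + 1) // l ∉ D}) => P i l.val)ᵀ
        0).mulVec (Sum.elim lam α') = Sum.elim F 0 :=
  rbf_reduced_linear_system_general nr nd nc k m n hn X hsum Φ P hP D hD F lam α hsol
end

section
/- Let n = n_r + n_d + m̂ where m̂ = m_1 + … + m_{n_c} and n_c ≥ 1, with categorical blocks B_h ⊆ {1,…,n} and last block indices j_h = n_r + n_d + m̂_h. Let x^1,…,x^k ∈ ℝ^n satisfy the unary-encoding constraints Σ_{j ∈ B_h} x^i_j = 1 for all i and h. Let φ : ℝ → ℝ, Φ_{il} = φ(‖x^i − x^l‖), let P be the k×(n+1) matrix whose i-th row is ((x^i)^⊤, 1), let P̂ be obtained from P by deleting the columns with indices j_1,…,j_{n_c}, and let F ∈ ℝ^k. If (λ, α̂) ∈ ℝ^k × ℝ^{n+1−n_c} solves the reduced system [[Φ, P̂],[P̂^⊤, 0]](λ; α̂) = (F; 0), and α ∈ ℝ^{n+1} is obtained from α̂ by inserting the value 0 at each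 of the deleted positions j_1,…,j_{n_c}, then (λ, α) solves the full system [[Φ, P],[P^⊤, 0]](λ; α) = (F; 0). -/
open Matrix

/-- A solution of the reduced RBF interpolation system extends to a solution of the
full system by inserting zeroes at the positions of the deleted columns. -/
theorem rbf_reduced_solution_extends
    (nr nd nc k : ℕ) (hnc : 1 ≤ nc) (m : ℕ → ℕ)
    (n : ℕ) (hn : n = nr + nd + ∑ i ∈ Finset.range nc, m i)
    (X : Fin k → EuclideanSpace ℝ (Fin n))
    (hsum : ∀ i : Fin k, ∀ h : ℕ, h < nc →
      ∑ j ∈ Finset.univ.filter (fun j : Fin n =>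
        nr + nd + ∑ i' ∈ Finset.range h, m i' ≤ (j : ℕ) ∧
        (j : ℕ) < nr + nd + ∑ i' ∈ Finset.range (h + 1), m i'), X i j = 1)
    (φ : ℝ → ℝ)
    (Φ : Matrix (Fin k) (Fin k) ℝ) (hΦ : ∀ i l, Φ i l = φ ‖X i - X l‖)
    (P : Matrix (Fin k) (Fin (n + 1)) ℝ)
    (hP : ∀ (i : Fin k) (l : Fin (n + 1)),
      P i l = if hl : (l : ℕ) < n then X i ⟨(l : ℕ), hl⟩ else 1)
    (D : Finset (Fin (n + 1)))
    (hD : ∀ l : Fin (n + 1), l ∈ D ↔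
      ∃ h < nc, (l : ℕ) + 1 = nr + nd + ∑ i' ∈ Finset.range (h + 1), m i')
    (F : Fin k → ℝ)
    (lam : Fin k → ℝ) (αhat : {l : Fin (n + 1) // l ∉ D} → ℝ)
    (hsolred : (Matrix.fromBlocks Φ
        (Matrix.of fun (i : Fin k) (l : {l : Fin (n + 1) // l ∉ D}) => P i l.val)
        (Matrix.of fun (i : Fin k) (l : {l : Fin (n + 1) // l ∉ D}) => P i l.val)ᵀ
        0).mulVec (Sum.elim lam αhat) = Sum.elim F 0)
    (α : Fin (n + 1) → ℝ)
    (hαkept : ∀ (l : Fin (n + 1)) (hl : l ∉ D), α l = αhat ⟨l, hl⟩)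
    (hαdel : ∀ l ∈ D, α l = 0) :
    (Matrix.fromBlocks Φ P Pᵀ 0).mulVec (Sum.elim lam α) = Sum.elim F 0 := by
  -- bottom rows of the reduced system
  have hbot : ∀ (l : Fin (n+1)), l ∉ D → ∑ i, lam i * P i l = 0 := by
    intro l hl
    have := congrFun hsolred (Sum.inr ⟨l, hl⟩)
    simp [Matrix.mulVec, dotProduct, Fintype.sum_sum_type,
      Matrix.fromBlocks] at this
    simpa [mul_comm] using this
  -- top rows of the reduced system
  have htop : ∀ i, (∑ l, Φ i l * lam l)
      + ∑ l : {l : Fin (n + 1) // l ∉ D}, P i l.val * αhat l = F i := by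
    intro i
    have := congrFun hsolred (Sum.inl i)
    simpa [Matrix.mulVec, dotProduct, Fintype.sum_sum_type,
      Matrix.fromBlocks] using this
  funext x
  cases x with
  | inl i =>
    simp only [Matrix.mulVec, dotProduct, Fintype.sum_sum_type,
      Matrix.fromBlocks, Matrix.of_apply, Sum.elim_inl, Sum.elim_inr]
    have hsplit : ∑ x : Fin (n + 1), P i x * α x
        = ∑ l : {l : Fin (n + 1) // l ∉ D}, P i l.val * αhat l :=
      calc ∑ x : Fin (n + 1), P i x * α x
          = ∑ x ∈ Dᶜ, P i x * α x := by
            rw [eq_comm]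
            refine Finset.sum_subset (Finset.subset_univ _) fun x _ hx => ?_
            rw [hαdel x (by simpa using hx), mul_zero]
        _ = ∑ x : {l : Fin (n + 1) // l ∉ D}, P i x.val * α x.val :=
            Finset.sum_subtype _ (fun x => Finset.mem_compl) _
        _ = ∑ l : {l : Fin (n + 1) // l ∉ D}, P i l.val * αhat l :=
            Finset.sum_congr rfl fun x _ => by rw [hαkept _ x.2]
    rw [hsplit]
    exact htop i
  | inr l =>
    simp only [Matrix.mulVec, dotProduct, Fintype.sum_sum_type,
      Matrix.fromBlocks, Matrix.of_apply, Sum.elim_inl, Sum.elim_inr,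
      Matrix.transpose_apply, Matrix.zero_apply, zero_mul, Finset.sum_const_zero,
      add_zero]
    -- goal : ∑ x, P x l * lam x = 0
    by_cases hlD : l ∈ D
    · rcases Nat.eq_zero_or_pos k with hk | hk
      · exact Finset.sum_eq_zero fun x _ => absurd x.2 (by omega)
      obtain ⟨h, hhc, hl1⟩ := (hD l).mp hlD
      have hsucc : ∑ i' ∈ Finset.range (h + 1), m i'
          = (∑ i' ∈ Finset.range h, m i') + m h := Finset.sum_range_succ m h
      set i0 : Fin k := ⟨0, hk⟩
      -- the h-th block is nonempty
      have hmh : 1 ≤ m h := by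
        by_contra hm
        have h0 : m h = 0 := by omega
        have hs := hsum i0 h hhc
        rw [Finset.filter_false_of_mem (fun j _ => by omega)] at hs
        simpa using hs
      have hSn : nr + nd + ∑ i' ∈ Finset.range (h + 1), m i' ≤ n := by
        have : ∑ i' ∈ Finset.range (h + 1), m i' ≤ ∑ i' ∈ Finset.range nc, m i' :=
          Finset.sum_le_sum_of_subset (Finset.range_subset_range.mpr hhc)
        omega
      have hln : (l : ℕ) < n := by omega
      -- the sum of the λ's vanishes (last column of the reduced system)
      have hlamsum : ∑ i, lam i = 0 := by
        have hnD : (⟨n, by omega⟩ : Fin (n + 1)) ∉ D := by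
          intro hmem
          obtain ⟨h', hh', he⟩ := (hD _).mp hmem
          have : ∑ i' ∈ Finset.range (h' + 1), m i' ≤ ∑ i' ∈ Finset.range nc, m i' :=
            Finset.sum_le_sum_of_subset (Finset.range_subset_range.mpr hh')
          simp at he
          omega
        have hb := hbot ⟨n, by omega⟩ hnD
        simpa [hP] using hb
      -- kept columns of the h-th block give vanishing sums
      have hkept : ∀ j : Fin n, (j : ℕ) ≠ (l : ℕ) →
          nr + nd + ∑ i' ∈ Finset.range h, m i' ≤ (j : ℕ) →
          (j : ℕ) < nr + nd + ∑ i' ∈ Finset.range (h + 1), m i' →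
          ∑ i, lam i * X i j = 0 := by
        intro j hjl hj1 hj2
        have hjD : (j.castSucc : Fin (n + 1)) ∉ D := by
          intro hmem
          obtain ⟨h', hh', he⟩ := (hD _).mp hmem
          simp [Fin.castSucc, Fin.castAdd, Fin.castLE] at he
          rcases le_or_gt (h' + 1) h with hc | hc
          · have : ∑ i' ∈ Finset.range (h' + 1), m i' ≤ ∑ i' ∈ Finset.range h, m i' :=
              Finset.sum_le_sum_of_subset (Finset.range_subset_range.mpr hc)
            omega
          · have : ∑ i' ∈ Finset.range (h + 1), m i' ≤ ∑ i' ∈ Finset.range (h' + 1), m i' :=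
              Finset.sum_le_sum_of_subset (Finset.range_subset_range.mpr (by omega))
            omega
        have hb := hbot j.castSucc hjD
        have hcol : ∀ i : Fin k, P i j.castSucc = X i j := by
          intro i
          rw [hP]
          rw [dif_pos (show ((j.castSucc : Fin (n + 1)) : ℕ) < n from j.2)]
          exact congrArg (X i) (Fin.ext (by simp))
        simpa [hcol] using hb
      -- sum over the block
      set B : Finset (Fin n) := Finset.univ.filter (fun j : Fin n =>
        nr + nd + ∑ i' ∈ Finset.range h, m i' ≤ (j : ℕ) ∧
        (j : ℕ) < nr + nd + ∑ i' ∈ Finset.range (h + 1), m i') with hB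
      have hblocksum : ∑ j ∈ B, (∑ i, lam i * X i j) = 0 := by
        rw [Finset.sum_comm]
        calc ∑ i, ∑ j ∈ B, lam i * X i j
            = ∑ i, lam i * ∑ j ∈ B, X i j := by
              refine Finset.sum_congr rfl fun i _ => ?_
              rw [Finset.mul_sum]
          _ = ∑ i, lam i := by
              refine Finset.sum_congr rfl fun i _ => ?_
              rw [hB, hsum i h hhc, mul_one]
          _ = 0 := hlamsum
      have hlmem : (⟨(l : ℕ), hln⟩ : Fin n) ∈ B := by
        rw [hB]
        simp only [Finset.mem_filter, Finset.mem_univ, true_and]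
        omega
      have hsingle : ∑ j ∈ B, (∑ i, lam i * X i j)
          = ∑ i, lam i * X i ⟨(l : ℕ), hln⟩ :=
        Finset.sum_eq_single_of_mem _ hlmem (fun j _ hj =>
          hkept j (fun hc => hj (Fin.ext hc))
            (by rw [hB] at *; simp only [Finset.mem_filter] at *; omega)
            (by rw [hB] at *; simp only [Finset.mem_filter] at *; omega))
      have hkey : ∑ i, lam i * X i ⟨(l : ℕ), hln⟩ = 0 := by
        rw [← hsingle]; exact hblocksum
      calc ∑ x, P x l * lam x = ∑ x, lam x * X x ⟨(l : ℕ), hln⟩ := by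
            refine Finset.sum_congr rfl fun x _ => ?_
            rw [hP, dif_pos hln, mul_comm]
        _ = 0 := hkey
    · have := hbot l hlD
      simpa [mul_comm] using this
end
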